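/- arXiv:1605.01192 — 4 statements merged into one kernel-verified Lean document; each statement's English description precedes it below -/
import Mathlib

section
/- Let F be a group generated by a finite set V, let X ⊆ F, and let ε, δ > 0. Assume every positive definite function φ on F with φ(1) = 1 and inf_{v∈V} |φ(v)| ≥ 1 − δ satisfies inf_{x∈X} |φ(x)| ≥ ε. Then every conditionally negative definite function ψ on F satisfies sup_{x∈X} ψ(x) ≤ ((−log ε)/δ) · sup_{v∈V} ψ(v). -/
open Finset

/-- A function `φ : F → ℂ` is positive definite if all the Gram-type sums
`Σᵢⱼ cᵢ c̄ⱼ φ(gⱼ⁻¹ gᵢ)` are nonnegative reals. -/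
def IsPosDefFn {F : Type*} [Group F] (φ : F → ℂ) : Prop :=
  ∀ (n : ℕ) (g : Fin n → F) (c : Fin n → ℂ),
    0 ≤ (∑ i, ∑ j, c i * (starRingEnd ℂ) (c j) * φ ((g j)⁻¹ * g i)).re ∧
      (∑ i, ∑ j, c i * (starRingEnd ℂ) (c j) * φ ((g j)⁻¹ * g i)).im = 0

/-- A function `ψ : F → ℝ` is conditionally negative definite if `ψ(1) = 0`,
`ψ(g⁻¹) = ψ(g)`, and `Σᵢⱼ cᵢ cⱼ ψ(gⱼ⁻¹ gᵢ) ≤ 0` whenever `Σᵢ cᵢ = 0`. -/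
def IsCondNegDefFn {F : Type*} [Group F] (ψ : F → ℝ) : Prop :=
  ψ 1 = 0 ∧ (∀ g : F, ψ g⁻¹ = ψ g) ∧
    ∀ (n : ℕ) (g : Fin n → F) (c : Fin n → ℝ), (∑ i, c i) = 0 →
      ∑ i, ∑ j, c i * c j * ψ ((g j)⁻¹ * g i) ≤ 0

/-!
Schoenberg: `ψ(gᵢ) + ψ(gⱼ) - ψ(gᵢ⁻¹gⱼ)` is a positive semidefinite kernel, so by the Schur
product theorem so is its entrywise exponential (a convergent sum of Hadamard powers), and a
Hadamard product with the rank-one matrix `exp(-tψ(gᵢ)) exp(-tψ(gⱼ))` turns it into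
`exp(-tψ(gᵢ⁻¹gⱼ))`. Hence `φₜ = exp(-tψ)` is a normalized positive definite function. It is real
and positive, and `|φₜ(v)| ≥ exp(-δ) ≥ 1 - δ` on `V` as soon as `t · sup_V ψ ≤ δ`; the hypothesis
then gives `t ψ(x) ≤ -log ε`. Taking `t = δ / sup_V ψ` (or `t → ∞` if `sup_V ψ = 0`) gives the
bound.
-/

open Matrix
open scoped ComplexOrder

namespace Matrix

variable {n : Type*} [Fintype n]

theorem PosSemidef.map_pow {𝕜 : Type*} [RCLike 𝕜] {A : Matrix n n 𝕜} (hA : A.PosSemidef)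
    (m : ℕ) : (A.map (· ^ m)).PosSemidef := by
  induction m with
  | zero =>
    convert posSemidef_vecMulVec_self_star (1 : n → 𝕜) using 1
    ext i j
    simp
  | succ m ih =>
    convert ih.hadamard hA using 1
    ext i j
    simp only [map_apply, hadamard_apply, pow_succ]

theorem PosSemidef.map_exp {A : Matrix n n ℝ} (hA : A.PosSemidef) :
    (A.map Real.exp).PosSemidef := by
  refine .of_dotProduct_mulVec_nonneg (hA.isHermitian.map _ fun _ => rfl) fun x => ?_
  have hsum : HasSum (fun m : ℕ => (m.factorial : ℝ)⁻¹ * (star x ⬝ᵥ (A.map (· ^ m) *ᵥ x)))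
      (star x ⬝ᵥ (A.map Real.exp *ᵥ x)) := by
    simp only [dotProduct, mulVec, Finset.mul_sum, map_apply]
    refine hasSum_sum fun i _ => hasSum_sum fun j _ => ?_
    have hexp : HasSum (fun m : ℕ => A i j ^ m / m.factorial) (Real.exp (A i j)) := by
      rw [Real.exp_eq_exp_ℝ]
      exact NormedSpace.expSeries_div_hasSum_exp _
    rw [show star x i * (Real.exp (A i j) * x j) = star x i * x j * Real.exp (A i j) by ring]
    exact (hexp.mul_left _).congr_fun fun m => by ring
  exact hsum.nonneg fun m =>
    mul_nonneg (by positivity) ((hA.map_pow m).dotProduct_mulVec_nonneg x)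

theorem PosSemidef.map_ofReal {A : Matrix n n ℝ} (hA : A.PosSemidef) :
    (A.map ((↑) : ℝ → ℂ)).PosSemidef := by
  obtain ⟨m, v, rfl⟩ := posSemidef_iff_eq_sum_vecMulVec.mp hA
  have : (∑ k, vecMulVec (v k) (star (v k))).map ((↑) : ℝ → ℂ)
      = ∑ k, vecMulVec (fun i => (v k i : ℂ)) (star fun i => (v k i : ℂ)) := by
    ext i j
    simp [Matrix.sum_apply, vecMulVec_apply]
  rw [this]
  exact posSemidef_sum _ fun k _ => posSemidef_vecMulVec_self_star _

end Matrix

section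

variable {F : Type*} [Group F] {ψ : F → ℝ}

-- `ψ(gᵢ) + ψ(gⱼ) - ψ(gᵢ⁻¹gⱼ)` is twice the Gromov product of `gᵢ, gⱼ` based at `1`.
theorem IsCondNegDefFn.posSemidef_gromov (hψ : IsCondNegDefFn ψ) {n : ℕ} (g : Fin n → F) :
    (of fun i j => ψ (g i) + ψ (g j) - ψ ((g i)⁻¹ * g j)).PosSemidef := by
  obtain ⟨h1, hinv, hcnd⟩ := hψ
  have hsymm (a b : F) : ψ (a⁻¹ * b) = ψ (b⁻¹ * a) := by
    rw [← hinv, _root_.mul_inv_rev, inv_inv]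
  refine .of_dotProduct_mulVec_nonneg ?_ fun x => ?_
  · ext i j
    simp only [conjTranspose_apply, of_apply, star_trivial, hsymm (g j)]
    ring
  obtain ⟨s, hs⟩ : ∃ s, ∑ i, x i = s := ⟨_, rfl⟩
  obtain ⟨L, hL⟩ : ∃ L, ∑ i, x i * ψ (g i) = L := ⟨_, rfl⟩
  have hquad : star x ⬝ᵥ (of (fun i j => ψ (g i) + ψ (g j) - ψ ((g i)⁻¹ * g j)) *ᵥ x)
      = L * s + s * L - ∑ i, ∑ j, x i * x j * ψ ((g j)⁻¹ * g i) := by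
    rw [← hs, ← hL, Finset.sum_mul_sum, Finset.sum_mul_sum, ← Finset.sum_add_distrib,
      ← Finset.sum_sub_distrib]
    refine Finset.sum_congr rfl fun i _ => ?_
    simp only [mulVec, dotProduct, of_apply, star_trivial, Finset.mul_sum,
      ← Finset.sum_add_distrib, ← Finset.sum_sub_distrib]
    exact Finset.sum_congr rfl fun j _ => by rw [hsymm (g j)]; ring
  -- test conditional negative definiteness on `1, g₁, …, gₙ` with weights `-∑ xᵢ, x₁, …, xₙ`
  have hcons := hcnd (n + 1) (Fin.cons 1 g) (Fin.cons (-s) x) (by simp [← hs, Fin.sum_cons])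
  simp only [Fin.sum_univ_succ, Fin.cons_zero, Fin.cons_succ, inv_one, one_mul, mul_one,
    h1, hinv, mul_zero, zero_add, Finset.sum_add_distrib] at hcons
  have hleft : ∑ j, -s * x j * ψ (g j) = -(s * L) := by
    rw [← hL, Finset.mul_sum, ← Finset.sum_neg_distrib]
    exact Finset.sum_congr rfl fun j _ => by ring
  have hright : ∑ i, x i * -s * ψ (g i) = -(L * s) := by
    rw [← hL, Finset.sum_mul, ← Finset.sum_neg_distrib]
    exact Finset.sum_congr rfl fun i _ => by ring
  rw [hleft, hright] at hcons
  rw [hquad]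
  linarith

theorem isPosDefFn_of_posSemidef {φ : F → ℂ}
    (h : ∀ (n : ℕ) (g : Fin n → F), (of fun i j => φ ((g i)⁻¹ * g j)).PosSemidef) :
    IsPosDefFn φ := by
  intro n g c
  have hsum : ∑ i, ∑ j, c i * starRingEnd ℂ (c j) * φ ((g j)⁻¹ * g i)
      = star c ⬝ᵥ (of (fun i j => φ ((g i)⁻¹ * g j)) *ᵥ c) := by
    rw [Finset.sum_comm]
    simp only [dotProduct, mulVec, of_apply, Finset.mul_sum, Pi.star_apply, RCLike.star_def]
    exact Finset.sum_congr rfl fun i _ => Finset.sum_congr rfl fun j _ => by ring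
  obtain ⟨hre, him⟩ := Complex.nonneg_iff.mp ((h n g).dotProduct_mulVec_nonneg c)
  rw [hsum]
  exact ⟨hre, him.symm⟩

theorem IsCondNegDefFn.isPosDefFn_exp (hψ : IsCondNegDefFn ψ) {t : ℝ} (ht : 0 ≤ t) :
    IsPosDefFn fun g => (Real.exp (-t * ψ g) : ℂ) := by
  refine isPosDefFn_of_posSemidef fun n g => ?_
  set e : Fin n → ℝ := fun i => Real.exp (-t * ψ (g i))
  have hfactor : (of fun i j => Real.exp (-t * ψ ((g i)⁻¹ * g j))) = vecMulVec e (star e) ⊙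
      (t • of fun i j => ψ (g i) + ψ (g j) - ψ ((g i)⁻¹ * g j)).map Real.exp := by
    ext i j
    simp only [e, of_apply, hadamard_apply, vecMulVec_apply, map_apply, Matrix.smul_apply,
      smul_eq_mul, star_trivial, ← Real.exp_add]
    congr 1
    ring
  have hexp := ((hψ.posSemidef_gromov g).smul ht).map_exp
  have hpsd := ((posSemidef_vecMulVec_self_star e).hadamard hexp).map_ofReal
  rwa [← hfactor] at hpsd

theorem IsCondNegDefFn.nonneg (hψ : IsCondNegDefFn ψ) (a : F) : 0 ≤ ψ a := by
  simpa [hψ.1] using (hψ.posSemidef_gromov ![a]).diag_nonneg (i := 0)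

end

theorem mul_le_mul_of_forall_mul_le {a L M δ : ℝ} (hδ : 0 ≤ δ) (hM : 0 ≤ M)
    (h : ∀ t, 0 ≤ t → t * M ≤ δ → t * a ≤ L) : δ * a ≤ L * M := by
  rcases hM.eq_or_lt with rfl | hM
  · have ha : a ≤ 0 := by
      by_contra! ha
      have := h ((|L| + 1) / a) (by positivity) (by simpa using hδ)
      rw [div_mul_cancel₀ _ ha.ne'] at this
      linarith [le_abs_self L]
    simpa using mul_nonpos_of_nonneg_of_nonpos hδ ha
  · have := h (δ / M) (by positivity) (div_mul_cancel₀ _ hM.ne').le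
    rwa [div_mul_eq_mul_div, div_le_iff₀ hM] at this

theorem stmt_2_general {F : Type*} [Group F] (V : Finset F) (hVne : V.Nonempty)
    (X : Set F) (ε δ : ℝ)
    (hε : 0 < ε) (hδ : 0 < δ)
    (hyp : ∀ φ : F → ℂ, IsPosDefFn φ → φ 1 = 1 →
      (∀ v ∈ V, 1 - δ ≤ ‖φ v‖) → ∀ x ∈ X, ε ≤ ‖φ x‖)
    (ψ : F → ℝ) (hψ : IsCondNegDefFn ψ) :
    ∀ x ∈ X, ψ x ≤ ((-Real.log ε) / δ) * V.sup' hVne ψ := by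
  intro x hx
  have hM : 0 ≤ V.sup' hVne ψ := (hψ.nonneg _).trans (le_sup' ψ hVne.choose_spec)
  rw [div_mul_eq_mul_div, le_div_iff₀ hδ, mul_comm]
  refine mul_le_mul_of_forall_mul_le hδ.le hM fun t ht htM => ?_
  have hnorm (g : F) : ‖(Real.exp (-t * ψ g) : ℂ)‖ = Real.exp (-t * ψ g) := by
    rw [Complex.norm_real, Real.norm_of_nonneg (Real.exp_pos _).le]
  have hV (v : F) (hv : v ∈ V) : 1 - δ ≤ ‖(Real.exp (-t * ψ v) : ℂ)‖ := by
    have htv : t * ψ v ≤ δ := (mul_le_mul_of_nonneg_left (le_sup' ψ hv) ht).trans htM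
    rw [hnorm]
    linarith [Real.add_one_le_exp (-t * ψ v)]
  have hεx := hyp _ (hψ.isPosDefFn_exp ht) (by simp [hψ.1]) hV x hx
  rw [hnorm, ← Real.log_le_iff_le_exp hε] at hεx
  linarith

/-- If every normalized positive definite function on `F` that is `≥ 1 - δ` in modulus
on a finite generating set `V` is `≥ ε` in modulus on `X`, then every conditionally
negative definite function `ψ` satisfies `sup_{x ∈ X} ψ(x) ≤ ((−log ε)/δ) · sup_{v ∈ V} ψ(v)`. -/
theorem stmt_2 {F : Type*} [Group F] (V : Finset F) (hVne : V.Nonempty)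
    (hVgen : Subgroup.closure (V : Set F) = ⊤) (X : Set F) (ε δ : ℝ)
    (hε : 0 < ε) (hδ : 0 < δ)
    (hyp : ∀ φ : F → ℂ, IsPosDefFn φ → φ 1 = 1 →
      (∀ v ∈ V, 1 - δ ≤ ‖φ v‖) → ∀ x ∈ X, ε ≤ ‖φ x‖)
    (ψ : F → ℝ) (hψ : IsCondNegDefFn ψ) :
    ∀ x ∈ X, ψ x ≤ ((-Real.log ε) / δ) * V.sup' hVne ψ :=
  stmt_2_general V hVne X ε δ hε hδ hyp ψ hψ
end

section
/- Let π: K ↠ K' be a surjective group homomorphism of finitely generated groups, V a finite generating set of K, V' = π(V). Suppose Cay(K,V) contains Cay(L,U) as a subgraph via an injective map ι: L → K compatible with the labeled edges, and suppose there is a group L' and a bijection f: π(ι(L)) → L' such that f∘π∘ι: L → L' is a surjective group homomorphism. Then the Cayley graph of the restricted permutational wreath product ℤ/2ℤ ≀_{L'} L with generating set {δ_{1_{L'}}} ∪ U embeds as a subgraph of the Cayley graph of ℤ/2ℤ ≀_{K'} K with generating set {δ_{1_{K'}}} ∪ V. -/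
open Function

/-- The restricted direct product `⊕_Q A`: functions `Q → A` with finite support,
as a subgroup of the full product. -/
def RestrictedProd (Q A : Type*) [Group A] : Subgroup (Q → A) where
  carrier := {f | (Function.mulSupport f).Finite}
  one_mem' := by
    have : Function.mulSupport (1 : Q → A) = ∅ := by
      ext q; simp [Function.mem_mulSupport]
    show (Function.mulSupport (1 : Q → A)).Finite
    rw [this]
    exact Set.finite_empty
  mul_mem' := by
    intro a b ha hb
    exact (ha.union hb).subset (Function.mulSupport_mul a b)
  inv_mem' := by
    intro a ha
    simpa using ha

/-- The automorphism of `⊕_Q A` induced by a permutation of the index set `Q`,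
`(σ · φ)(q) = φ(σ⁻¹ q)`. -/
def permAut {Q A : Type*} [Group A] (σ : Equiv.Perm Q) :
    RestrictedProd Q A ≃* RestrictedProd Q A where
  toFun f := ⟨fun q => f.1 (σ⁻¹ q), by
    have : Function.mulSupport (fun q => f.1 (σ⁻¹ q)) ⊆ ⇑σ '' (Function.mulSupport f.1) := by
      intro q hq
      exact ⟨σ⁻¹ q, hq, by simp⟩
    exact (f.2.image _).subset this⟩
  invFun f := ⟨fun q => f.1 (σ q), by
    have : Function.mulSupport (fun q => f.1 (σ q)) ⊆ ⇑σ⁻¹ '' (Function.mulSupport f.1) := by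
      intro q hq
      exact ⟨σ q, hq, by simp⟩
    exact (f.2.image _).subset this⟩
  left_inv f := by ext q; simp
  right_inv f := by ext q; simp
  map_mul' f g := by ext q; rfl

/-- The action of `B` on `⊕_Q A` by permutation of the indices through a
homomorphism `B →* Perm Q`. -/
def wreathAction {Q A B : Type*} [Group A] [Group B] (act : B →* Equiv.Perm Q) :
    B →* MulAut (RestrictedProd Q A) where
  toFun b := permAut (act b)
  map_one' := by ext f q; simp [permAut]
  map_mul' b₁ b₂ := by ext f q; simp [permAut, mul_assoc]

/-- The restricted permutational wreath product `A ≀_Q B` with the action of `B` on `Q`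
given by `act : B →* Perm Q`: the semidirect product `(⊕_Q A) ⋊ B`. -/
abbrev Wreath (Q A B : Type*) [Group A] [Group B] (act : B →* Equiv.Perm Q) :=
  SemidirectProduct (RestrictedProd Q A) B (wreathAction act)

/-- Left translation action of `Q` on itself composed with `p : B →* Q`. -/
def leftTransPerm {B Q : Type*} [Group B] [Group Q] (p : B →* Q) : B →* Equiv.Perm Q :=
  (MulAction.toPermHom Q Q).comp p

open scoped Classical in
/-- The element `δ` of `⊕_Q A`, supported at `q₀` with value `a`. -/
noncomputable def deltaFn {Q A : Type*} [Group A] (q₀ : Q) (a : A) : RestrictedProd Q A :=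
  ⟨fun q => if q = q₀ then a else 1, by
    apply Set.Finite.subset (Set.finite_singleton q₀)
    intro q hq
    simp only [Function.mem_mulSupport] at hq
    by_contra h
    simp only [Set.mem_singleton_iff] at h
    simp [h] at hq⟩

/-- The Cayley graph of a group with respect to a (symmetrized) generating set. -/
def cayleyGraph (G : Type*) [Group G] (S : Set G) : SimpleGraph G where
  Adj x y := x ≠ y ∧ (x⁻¹ * y ∈ S ∨ y⁻¹ * x ∈ S)
  symm := ⟨by
    rintro x y ⟨h, hs⟩
    exact ⟨h.symm, hs.symm⟩⟩
  loopless := ⟨fun x h => h.1 rfl⟩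

/-- The generating set `{δ_{1_Q}} ∪ V` of the wreath product `ℤ/2ℤ ≀_Q B`. -/
noncomputable def wreathGen {Q B : Type*} [Group Q] [Group B] (act : B →* Equiv.Perm Q)
    (V : Set B) : Set (Wreath Q (Multiplicative (ZMod 2)) B act) :=
  insert ⟨deltaFn (1 : Q) (Multiplicative.ofAdd (1 : ZMod 2)), 1⟩
    {w | ∃ v ∈ V, w = ⟨1, v⟩}

/-! Since `σ` is surjective and has the same fibres as `π ∘ ι`, there is an injection
`g : L' → K'` with `g ∘ σ = π ∘ ι`. The embedding sends `(φ, l)` to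
`(φ pushed forward along g, ι l)`. Right multiplication by `δ` toggles the lamp at `σ l`,
respectively at `π (ι l) = g (σ l)`, and right multiplication by `u ∈ U` becomes right
multiplication by the `v ∈ V` with `ι (l u) = ι l v`, so edges of the Cayley graph go to
edges. -/

namespace RestrictedProd

variable {Q Q' A : Type*} [Group A]

lemma coe_deltaFn [DecidableEq Q] (q₀ : Q) (a : A) :
    ((deltaFn q₀ a : RestrictedProd Q A) : Q → A) = Pi.mulSingle q₀ a := by
  ext q
  simp only [deltaFn, Pi.mulSingle_apply]
  congr

lemma permAut_leftTransPerm_deltaFn {B : Type*} [Group B] [Group Q] (p : B →* Q) (b : B)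
    (q₀ : Q) (a : A) :
    permAut (leftTransPerm p b) (deltaFn q₀ a) = deltaFn (p b * q₀) a := by
  classical
  ext q
  change (deltaFn q₀ a : Q → A) ((p b)⁻¹ * q) = (deltaFn (p b * q₀) a : Q → A) q
  rw [coe_deltaFn, coe_deltaFn]
  simp only [Pi.mulSingle_apply, inv_mul_eq_iff_eq_mul]

noncomputable def extendByOne (g : Q → Q') : RestrictedProd Q A →* RestrictedProd Q' A :=
  ((Function.ExtendByOne.hom A g).comp (RestrictedProd Q A).subtype).codRestrict _
    fun φ => φ.2.image g |>.subset mulSupport_extend_one_subset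

lemma coe_extendByOne (g : Q → Q') (φ : RestrictedProd Q A) :
    (extendByOne g φ : Q' → A) = extend g φ (1 : Q' → A) := rfl

lemma extendByOne_injective {g : Q → Q'} (hg : Injective g) :
    Injective (extendByOne g : RestrictedProd Q A → RestrictedProd Q' A) := fun _ _ h =>
  Subtype.ext <| extend_injective hg (1 : Q' → A) <| congrArg Subtype.val h

lemma extendByOne_deltaFn {g : Q → Q'} (hg : Injective g) (q : Q) (a : A) :
    extendByOne g (deltaFn q a) = deltaFn (g q) a := by
  classical
  ext q'
  rw [coe_extendByOne, coe_deltaFn, coe_deltaFn]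
  by_cases h : ∃ x, g x = q'
  · obtain ⟨x, rfl⟩ := h
    simp [hg.extend_apply, hg.eq_iff, Pi.mulSingle_apply]
  · rw [extend_apply' _ _ _ h, Pi.mulSingle_eq_of_ne (fun hq => h ⟨q, hq.symm⟩), Pi.one_apply]

end RestrictedProd

open RestrictedProd

lemma exists_injective_comp_eq_of_surjective {α β γ : Type*} {σ : α → β} {f : α → γ}
    (hσ : Surjective σ) (hfib : ∀ a₁ a₂, σ a₁ = σ a₂ ↔ f a₁ = f a₂) :
    ∃ g : β → γ, Injective g ∧ ∀ a, g (σ a) = f a := by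
  have hcomp : ∀ a, f (surjInv hσ (σ a)) = f a := fun a =>
    (hfib _ a).mp (surjInv_eq hσ (σ a))
  refine ⟨f ∘ surjInv hσ, fun b₁ b₂ h => ?_, hcomp⟩
  obtain ⟨a₁, rfl⟩ := hσ b₁
  obtain ⟨a₂, rfl⟩ := hσ b₂
  exact (hfib a₁ a₂).mpr ((hcomp a₁).symm.trans (h.trans (hcomp a₂)))

lemma cayleyGraph_adj_map {G H : Type*} [Group G] [Group H] {S : Set G} {T : Set H}
    {j : G → H} (hj : Injective j) (hmul : ∀ x, ∀ s ∈ S, ∃ t ∈ T, j (x * s) = j x * t)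
    {x y : G} (hxy : (cayleyGraph G S).Adj x y) : (cayleyGraph H T).Adj (j x) (j y) := by
  have hmem : ∀ x y : G, x⁻¹ * y ∈ S → (j x)⁻¹ * j y ∈ T := fun x y hs => by
    obtain ⟨t, ht, hjt⟩ := hmul x _ hs
    rw [mul_inv_cancel_left] at hjt
    rwa [hjt, inv_mul_cancel_left]
  exact ⟨hj.ne hxy.1, hxy.2.imp (hmem x y) (hmem y x)⟩

section WreathMap

variable {Q Q' A L K : Type*} [Group A] [Group L] [Group K]
  {act : L →* Equiv.Perm Q} {act' : K →* Equiv.Perm Q'}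

noncomputable def wreathMap (g : Q → Q') (ι : L → K) (w : Wreath Q A L act) :
    Wreath Q' A K act' :=
  ⟨extendByOne g w.left, ι w.right⟩

lemma wreathMap_injective {g : Q → Q'} {ι : L → K} (hg : Injective g) (hι : Injective ι) :
    Injective (wreathMap g ι : Wreath Q A L act → Wreath Q' A K act') := fun _ _ h =>
  SemidirectProduct.ext (extendByOne_injective hg (congrArg SemidirectProduct.left h))
    (hι (congrArg SemidirectProduct.right h))

lemma wreathMap_mul_inr (g : Q → Q') {ι : L → K} (w : Wreath Q A L act) {u : L} {v : K}
    (huv : ι (w.right * u) = ι w.right * v) :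
    wreathMap (act' := act') g ι (w * ⟨1, u⟩) = wreathMap g ι w * ⟨1, v⟩ := by
  refine SemidirectProduct.ext ?_ huv
  simp [wreathMap]

end WreathMap

lemma wreathMap_mul_delta {Q Q' A L K : Type*} [Group A] [Group L] [Group K] [Group Q]
    [Group Q'] {σ : L →* Q} {π : K →* Q'} {g : Q → Q'} {ι : L → K} (hg : Injective g)
    (hgι : ∀ l, g (σ l) = π (ι l)) (w : Wreath Q A L (leftTransPerm σ)) (a : A) :
    wreathMap g ι (w * ⟨deltaFn 1 a, 1⟩) =
      (wreathMap g ι w : Wreath Q' A K (leftTransPerm π)) * ⟨deltaFn 1 a, 1⟩ := by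
  refine SemidirectProduct.ext ?_ (congrArg ι (mul_one w.right) |>.trans (mul_one _).symm)
  change extendByOne g (w.left * permAut (leftTransPerm σ w.right) (deltaFn 1 a)) =
    extendByOne g w.left * permAut (leftTransPerm π (ι w.right)) (deltaFn 1 a)
  rw [map_mul, permAut_leftTransPerm_deltaFn, permAut_leftTransPerm_deltaFn,
    extendByOne_deltaFn hg, mul_one, mul_one, hgι]

lemma exists_mem_wreathGen_wreathMap_mul {Q Q' L K : Type*} [Group L] [Group K] [Group Q]
    [Group Q'] {σ : L →* Q} {π : K →* Q'} {U : Set L} {V : Set K} {g : Q → Q'}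
    {ι : L → K} (hg : Injective g) (hgι : ∀ l, g (σ l) = π (ι l))
    (hsub : ∀ l : L, ∀ u ∈ U, ∃ v ∈ V, ι (l * u) = ι l * v)
    (w : Wreath Q (Multiplicative (ZMod 2)) L (leftTransPerm σ)) :
    ∀ s ∈ wreathGen (leftTransPerm σ) U, ∃ t ∈ wreathGen (leftTransPerm π) V,
      wreathMap g ι (w * s) = wreathMap g ι w * t := by
  rintro s (rfl | ⟨u, hu, rfl⟩)
  · exact ⟨_, Set.mem_insert _ _, wreathMap_mul_delta hg hgι w _⟩
  · obtain ⟨v, hv, huv⟩ := hsub w.right u hu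
    exact ⟨⟨1, v⟩, Or.inr ⟨v, hv, rfl⟩, wreathMap_mul_inr g w huv⟩

theorem stmt_7_general {K K' L L' : Type*} [Group K] [Group K'] [Group L] [Group L']
    (π : K →* K') (V : Set K) (U : Set L)
    (ι : L → K) (hι : Function.Injective ι)
    (hsub : ∀ l : L, ∀ u ∈ U, ∃ v ∈ V, ι (l * u) = ι l * v)
    (σ : L →* L') (hσ : Function.Surjective σ)
    (hbij : ∀ l₁ l₂ : L, σ l₁ = σ l₂ ↔ π (ι l₁) = π (ι l₂)) :
    ∃ j : Wreath L' (Multiplicative (ZMod 2)) L (leftTransPerm σ) →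
        Wreath K' (Multiplicative (ZMod 2)) K (leftTransPerm π),
      Function.Injective j ∧
        ∀ w₁ w₂, (cayleyGraph _ (wreathGen (leftTransPerm σ) U)).Adj w₁ w₂ →
          (cayleyGraph _ (wreathGen (leftTransPerm π) V)).Adj (j w₁) (j w₂) := by
  obtain ⟨g, hg, hgι⟩ := exists_injective_comp_eq_of_surjective hσ hbij
  exact ⟨wreathMap g ι, wreathMap_injective hg hι, fun _ _ =>
    cayleyGraph_adj_map (wreathMap_injective hg hι)
      (exists_mem_wreathGen_wreathMap_mul hg hgι hsub)⟩

/-- If `Cay(K,V)` contains `Cay(L,U)` as a labeled subgraph via an injective `ι`, and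
there is a bijection of `π(ι(L))` with `L'` making `L → L'` a surjective homomorphism `σ`,
then the Cayley graph of `ℤ/2ℤ ≀_{L'} L` with generating set `{δ} ∪ U` embeds as a
subgraph of the Cayley graph of `ℤ/2ℤ ≀_{K'} K` with generating set `{δ} ∪ V`. -/
theorem stmt_7 {K K' L L' : Type*} [Group K] [Group K'] [Group L] [Group L']
    (π : K →* K') (hπ : Function.Surjective π)
    (V : Set K) (hVfin : V.Finite) (hVgen : Subgroup.closure V = ⊤)
    (U : Set L) (hUgen : Subgroup.closure U = ⊤)
    (ι : L → K) (hι : Function.Injective ι)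
    (hsub : ∀ l : L, ∀ u ∈ U, ∃ v ∈ V, ι (l * u) = ι l * v)
    (σ : L →* L') (hσ : Function.Surjective σ)
    (hbij : ∀ l₁ l₂ : L, σ l₁ = σ l₂ ↔ π (ι l₁) = π (ι l₂)) :
    ∃ j : Wreath L' (Multiplicative (ZMod 2)) L (leftTransPerm σ) →
        Wreath K' (Multiplicative (ZMod 2)) K (leftTransPerm π),
      Function.Injective j ∧
        ∀ w₁ w₂, (cayleyGraph _ (wreathGen (leftTransPerm σ) U)).Adj w₁ w₂ →
          (cayleyGraph _ (wreathGen (leftTransPerm π) V)).Adj (j w₁) (j w₂) :=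
  stmt_7_general π V U ι hι hsub σ hσ hbij
end

section
/- Let p: Γ̃ → Γ be a covering of connected S-labeled graphs preserving labels and orientations. Then the identity map on generators s ↦ s extends to a surjective group homomorphism G(Γ̃) ↠ G(Γ), where G(Λ) = ⟨S | labels of all nontrivial simple closed paths in Λ⟩. -/
open SimpleGraph

/-- The label of a walk in an `S`-labeled graph: the product in the free group of the
labels of its edges. -/
def walkLabel {V S : Type*} {Γ : SimpleGraph V}
    (lab : ∀ ⦃x y : V⦄, Γ.Adj x y → FreeGroup S) :
    ∀ {x y : V}, Γ.Walk x y → FreeGroup S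
  | _, _, SimpleGraph.Walk.nil => 1
  | _, _, SimpleGraph.Walk.cons h w => lab h * walkLabel lab w

/-- An `S`-labeling of a graph: each oriented edge carries a label which is a generator
of the free group on `S` or the inverse of one, and opposite orientations of an edge
carry mutually inverse labels. -/
structure IsLabeling {V S : Type*} (Γ : SimpleGraph V)
    (lab : ∀ ⦃x y : V⦄, Γ.Adj x y → FreeGroup S) : Prop where
  gen : ∀ ⦃x y : V⦄ (h : Γ.Adj x y),
    ∃ s : S, lab h = FreeGroup.of s ∨ lab h = (FreeGroup.of s)⁻¹
  inv : ∀ ⦃x y : V⦄ (h : Γ.Adj x y), lab h.symm = (lab h)⁻¹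

/-- The labels of all nontrivial simple closed paths of a labeled graph. -/
def cycleLabels {V S : Type*} (Γ : SimpleGraph V)
    (lab : ∀ ⦃x y : V⦄, Γ.Adj x y → FreeGroup S) : Set (FreeGroup S) :=
  {g | ∃ (v : V) (w : Γ.Walk v v), w.IsCycle ∧ walkLabel lab w = g}

/-- The group `G(Γ)` defined by the graphical presentation `⟨S ∣ labels of simple
closed paths of Γ⟩`. -/
def graphGroup {V S : Type*} (Γ : SimpleGraph V)
    (lab : ∀ ⦃x y : V⦄, Γ.Adj x y → FreeGroup S) :=
  FreeGroup S ⧸ Subgroup.normalClosure (cycleLabels Γ lab)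

noncomputable instance {V S : Type*} (Γ : SimpleGraph V)
    (lab : ∀ ⦃x y : V⦄, Γ.Adj x y → FreeGroup S) : Group (graphGroup Γ lab) :=
  QuotientGroup.Quotient.group _

/-!
A label-preserving graph morphism sends every simple cycle of `Γ'` to a closed walk of `Γ`
with the same label, so it suffices that the label of any closed walk of `Γ` lies in the
normal closure of the cycle labels. By induction on length: a closed walk `v → x ⋯ → v`
whose tail is a path is either a simple cycle or the backtrack `v → x → v`, whose label
is trivial because opposite orientations carry inverse labels; otherwise the tail revisits
a vertex, and the walk splits into a conjugate of a shorter closed loop times a shorter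
closed walk.
-/

namespace SimpleGraph.Walk

variable {V : Type*} {Γ : SimpleGraph V}

theorem exists_eq_append_cons_append_of_not_isPath {x y : V} (w : Γ.Walk x y)
    (hw : ¬ w.IsPath) :
    ∃ (u z : V) (a : Γ.Walk x u) (h : Γ.Adj u z) (c : Γ.Walk z u) (b : Γ.Walk u y),
      w = a.append ((cons h c).append b) := by
  classical
  induction w with
  | nil => exact absurd IsPath.nil hw
  | @cons x x₁ y h r ih =>
    by_cases hr : r.IsPath
    · have hx : x ∈ r.support := by
        by_contra hx
        exact hw ((cons_isPath_iff h r).mpr ⟨hr, hx⟩)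
      refine ⟨x, x₁, nil, h, r.takeUntil x hx, r.dropUntil x hx, ?_⟩
      simp only [nil_append, cons_append, take_spec]
    · obtain ⟨u, z, a, h', c, b, rfl⟩ := ih hr
      exact ⟨u, z, cons h a, h', c, b, rfl⟩

end SimpleGraph.Walk

section WalkLabel

variable {V S : Type*} {Γ : SimpleGraph V} {lab : ∀ ⦃x y : V⦄, Γ.Adj x y → FreeGroup S}

@[simp] lemma walkLabel_nil {x : V} : walkLabel lab (Walk.nil : Γ.Walk x x) = 1 := rfl

@[simp] lemma walkLabel_cons {x y z : V} (h : Γ.Adj x y) (w : Γ.Walk y z) :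
    walkLabel lab (Walk.cons h w) = lab h * walkLabel lab w := rfl

@[simp] lemma walkLabel_append {x y z : V} (w : Γ.Walk x y) (w' : Γ.Walk y z) :
    walkLabel lab (w.append w') = walkLabel lab w * walkLabel lab w' := by
  induction w with
  | nil => simp
  | cons h w ih => simp [ih, mul_assoc]

lemma walkLabel_map {V' : Type*} {Γ' : SimpleGraph V'}
    {lab' : ∀ ⦃x y : V'⦄, Γ'.Adj x y → FreeGroup S} (f : Γ' →g Γ)
    (hf : ∀ ⦃x y : V'⦄ (h : Γ'.Adj x y), lab (f.map_adj h) = lab' h) {x y : V'}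
    (w : Γ'.Walk x y) : walkLabel lab (w.map f) = walkLabel lab' w := by
  induction w with
  | nil => rfl
  | cons h w ih => simp [Walk.map_cons, ih, hf h]

theorem walkLabel_mem_normalClosure_cycleLabels (hlab : IsLabeling Γ lab) {v : V}
    (w : Γ.Walk v v) : walkLabel lab w ∈ Subgroup.normalClosure (cycleLabels Γ lab) := by
  induction hn : w.length using Nat.strong_induction_on generalizing v with
  | _ n ih =>
    cases w with
    | nil => exact Subgroup.one_mem _
    | @cons _ x _ h r =>
      by_cases hr : r.IsPath
      · by_cases he : s(v, x) ∈ r.edges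
        · rw [hr.eq_adj_toWalk_of_mem_edges (Sym2.eq_swap ▸ he)]
          simp [Adj.toWalk, hlab.inv h]
        · exact Subgroup.subset_normalClosure
            ⟨v, _, (Walk.cons_isCycle_iff r h).mpr ⟨hr, he⟩, rfl⟩
      · obtain ⟨u, z, a, h', c, b, rfl⟩ := r.exists_eq_append_cons_append_of_not_isPath hr
        simp only [Walk.length_cons, Walk.length_append] at hn
        have hloop := ih (Walk.cons h' c).length (by rw [Walk.length_cons]; omega) _ rfl
        have hrest := ih (Walk.cons h (a.append b)).length
          (by rw [Walk.length_cons, Walk.length_append]; omega) _ rfl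
        have hsplit : walkLabel lab (Walk.cons h (a.append ((Walk.cons h' c).append b))) =
            (lab h * walkLabel lab a) * walkLabel lab (Walk.cons h' c) *
              (lab h * walkLabel lab a)⁻¹ * walkLabel lab (Walk.cons h (a.append b)) := by
          simp only [walkLabel_cons, walkLabel_append]
          group
        rw [hsplit]
        exact Subgroup.mul_mem _ (Subgroup.normalClosure_normal.conj_mem _ hloop _) hrest

theorem normalClosure_cycleLabels_le_of_hom {V' : Type*} {Γ' : SimpleGraph V'}
    {lab' : ∀ ⦃x y : V'⦄, Γ'.Adj x y → FreeGroup S} (hlab : IsLabeling Γ lab) (f : Γ' →g Γ)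
    (hf : ∀ ⦃x y : V'⦄ (h : Γ'.Adj x y), lab (f.map_adj h) = lab' h) :
    Subgroup.normalClosure (cycleLabels Γ' lab') ≤ Subgroup.normalClosure (cycleLabels Γ lab) := by
  refine Subgroup.normalClosure_le_normal ?_
  rintro _ ⟨v, w, -, rfl⟩
  rw [← walkLabel_map f hf]
  exact walkLabel_mem_normalClosure_cycleLabels hlab _

end WalkLabel

theorem stmt_9_general {V V' S : Type*} (Γ : SimpleGraph V) (Γ' : SimpleGraph V')
    (lab : ∀ ⦃x y : V⦄, Γ.Adj x y → FreeGroup S)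
    (lab' : ∀ ⦃x y : V'⦄, Γ'.Adj x y → FreeGroup S)
    (hlab : IsLabeling Γ lab)
    (p : V' → V)
    (hadj : ∀ ⦃x y : V'⦄, Γ'.Adj x y → Γ.Adj (p x) (p y))
    (hpres : ∀ ⦃x y : V'⦄ (h : Γ'.Adj x y), lab (hadj h) = lab' h) :
    ∃ φ : graphGroup Γ' lab' →* graphGroup Γ lab,
      Function.Surjective φ ∧
        ∀ s : S, φ (QuotientGroup.mk (FreeGroup.of s)) = QuotientGroup.mk (FreeGroup.of s) := by
  let f : Γ' →g Γ := ⟨p, fun h => hadj h⟩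
  have hle := normalClosure_cycleLabels_le_of_hom hlab f hpres
  exact ⟨QuotientGroup.map _ _ (MonoidHom.id _) hle,
    QuotientGroup.map_surjective_of_surjective _ _ _ QuotientGroup.mk_surjective hle, fun _ => rfl⟩

/-- Quotients from coverings: a label-preserving covering `p : Γ̃ → Γ` of connected
`S`-labeled graphs induces a surjective homomorphism `G(Γ̃) ↠ G(Γ)` which is the
identity `s ↦ s` on the generators. -/
theorem stmt_9 {V V' S : Type*} (Γ : SimpleGraph V) (Γ' : SimpleGraph V')
    (lab : ∀ ⦃x y : V⦄, Γ.Adj x y → FreeGroup S)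
    (lab' : ∀ ⦃x y : V'⦄, Γ'.Adj x y → FreeGroup S)
    (hlab : IsLabeling Γ lab) (hlab' : IsLabeling Γ' lab')
    (hconn : Γ.Connected) (hconn' : Γ'.Connected)
    (p : V' → V)
    (hadj : ∀ ⦃x y : V'⦄, Γ'.Adj x y → Γ.Adj (p x) (p y))
    (hpres : ∀ ⦃x y : V'⦄ (h : Γ'.Adj x y), lab (hadj h) = lab' h)
    (hcov : ∀ (x : V') (y : V), Γ.Adj (p x) y → ∃! x' : V', Γ'.Adj x x' ∧ p x' = y) :
    ∃ φ : graphGroup Γ' lab' →* graphGroup Γ lab,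
      Function.Surjective φ ∧
        ∀ s : S, φ (QuotientGroup.mk (FreeGroup.of s)) = QuotientGroup.mk (FreeGroup.of s) :=
  stmt_9_general Γ Γ' lab lab' hlab p hadj hpres
end

section
/- Let W be a finite group generated by Σ, X ⊆ W, and C > 0 such that every conditionally negative definite function ψ on W satisfies sup_{x∈X} ψ(x) ≤ C · sup_{σ∈Σ} ψ(σ). Then every function f: W → H into a Hilbert space satisfies the relative Poincaré inequality (1/|X|) Σ_{(w,x)∈W×X} ‖f(w) − f(wx)‖² ≤ C|Σ| · Σ_{(w,σ)∈W×Σ} ‖f(w) − f(wσ)‖². -/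
/-!
The translation energy `ψ(g) = Σ_v ‖f(v) − f(vg)‖²` of `f` is conditionally negative definite,
because `ψ(g⁻¹h) = Σ_v ‖f(vg) − f(vh)‖²` is a sum of kernels `‖a_g − a_h‖²` of Hilbert-space
vectors. The hypothesis applied to `ψ` bounds the average of `ψ` over `X` by
`C · max_{σ ∈ Σ} ψ(σ) ≤ C|Σ| · Σ_{σ ∈ Σ} ψ(σ)`, which is the claimed inequality after
exchanging the order of summation.
-/

open Finset

theorem sum_sum_mul_mul_norm_sub_sq_nonpos {H ι : Type*} [NormedAddCommGroup H]
    [InnerProductSpace ℝ H] (s : Finset ι) (a : ι → H) {c : ι → ℝ} (hc : ∑ i ∈ s, c i = 0) :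
    ∑ i ∈ s, ∑ j ∈ s, c i * c j * ‖a i - a j‖ ^ 2 ≤ 0 := by
  have h := inner_sum_smul_sum_smul_of_sum_eq_zero a hc a hc
  simp_rw [← sq] at h
  linarith [real_inner_self_nonneg (x := ∑ i ∈ s, c i • a i)]

section TranslationEnergy

variable {W H : Type*} [Group W] [Fintype W] [NormedAddCommGroup H]

def translationEnergy (f : W → H) (g : W) : ℝ :=
  ∑ v, ‖f v - f (v * g)‖ ^ 2

theorem translationEnergy_nonneg (f : W → H) (g : W) : 0 ≤ translationEnergy f g :=
  sum_nonneg fun _ _ ↦ sq_nonneg _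

theorem translationEnergy_inv_mul (f : W → H) (g h : W) :
    translationEnergy f (g⁻¹ * h) = ∑ v, ‖f (v * g) - f (v * h)‖ ^ 2 :=
  Fintype.sum_equiv (Equiv.mulRight g⁻¹) _ _ fun v ↦ by simp [mul_assoc]

theorem translationEnergy_inv (f : W → H) (g : W) :
    translationEnergy f g⁻¹ = translationEnergy f g := by
  rw [← mul_one g⁻¹, translationEnergy_inv_mul]
  simp [translationEnergy, norm_sub_rev]

theorem isCondNegDefFn_translationEnergy [InnerProductSpace ℝ H] (f : W → H) :
    IsCondNegDefFn (translationEnergy f) := by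
  refine ⟨by simp [translationEnergy], translationEnergy_inv f, fun n g c hc ↦ ?_⟩
  simp_rw [translationEnergy_inv_mul, mul_sum]
  rw [sum_comm_cycle]
  refine sum_nonpos fun v _ ↦ ?_
  simpa [norm_sub_rev] using
    sum_sum_mul_mul_norm_sub_sq_nonpos univ (fun i ↦ f (v * g i)) hc

end TranslationEnergy

theorem stmt_12_general {W : Type*} [Group W] [Fintype W]
    (S : Finset W) (hSne : S.Nonempty)
    (X : Finset W) (hXne : X.Nonempty) (C : ℝ) (hC : 0 < C)
    (hyp : ∀ ψ : W → ℝ, IsCondNegDefFn ψ → X.sup' hXne ψ ≤ C * S.sup' hSne ψ)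
    {H : Type*} [NormedAddCommGroup H] [InnerProductSpace ℝ H]
    (f : W → H) :
    (1 / (X.card : ℝ)) * ∑ w : W, ∑ x ∈ X, ‖f w - f (w * x)‖ ^ 2 ≤
      C * (S.card : ℝ) * ∑ w : W, ∑ σ ∈ S, ‖f w - f (w * σ)‖ ^ 2 := by
  set ψ := translationEnergy f
  rw [sum_comm, sum_comm (s := univ)]
  change 1 / (X.card : ℝ) * ∑ x ∈ X, ψ x ≤ C * S.card * ∑ σ ∈ S, ψ σ
  have hψ : ∀ g, 0 ≤ ψ g := translationEnergy_nonneg f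
  have hX : ∑ x ∈ X, ψ x ≤ X.card * X.sup' hXne ψ := by
    simpa using sum_le_card_nsmul X ψ _ fun x hx ↦ le_sup' ψ hx
  have hS : S.sup' hSne ψ ≤ S.card * ∑ σ ∈ S, ψ σ := by
    have hcard : (1 : ℝ) ≤ S.card := by exact_mod_cast hSne.card_pos
    refine sup'_le _ _ fun σ hσ ↦ (single_le_sum (fun g _ ↦ hψ g) hσ).trans ?_
    exact le_mul_of_one_le_left (sum_nonneg fun g _ ↦ hψ g) hcard
  calc 1 / (X.card : ℝ) * ∑ x ∈ X, ψ x ≤ X.sup' hXne ψ := by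
        rw [one_div_mul_eq_div, div_le_iff₀ (by exact_mod_cast hXne.card_pos)]
        linarith
    _ ≤ C * S.sup' hSne ψ := hyp ψ (isCondNegDefFn_translationEnergy f)
    _ ≤ C * S.card * ∑ σ ∈ S, ψ σ := by
        rw [mul_assoc]
        exact mul_le_mul_of_nonneg_left hS hC.le

/-- If every conditionally negative definite function `ψ` on a finite group `W`
satisfies `sup_{x ∈ X} ψ(x) ≤ C · sup_{σ ∈ Σ} ψ(σ)`, then every `f : W → H` into a
Hilbert space satisfies the relative Poincaré inequality
`(1/|X|) Σ_{(w,x) ∈ W×X} ‖f(w) − f(wx)‖² ≤ C|Σ| Σ_{(w,σ) ∈ W×Σ} ‖f(w) − f(wσ)‖²`. -/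
theorem stmt_12 {W : Type*} [Group W] [Fintype W]
    (S : Finset W) (hSne : S.Nonempty) (hSgen : Subgroup.closure (S : Set W) = ⊤)
    (X : Finset W) (hXne : X.Nonempty) (C : ℝ) (hC : 0 < C)
    (hyp : ∀ ψ : W → ℝ, IsCondNegDefFn ψ → X.sup' hXne ψ ≤ C * S.sup' hSne ψ)
    {H : Type*} [NormedAddCommGroup H] [InnerProductSpace ℝ H] [CompleteSpace H]
    (f : W → H) :
    (1 / (X.card : ℝ)) * ∑ w : W, ∑ x ∈ X, ‖f w - f (w * x)‖ ^ 2 ≤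
      C * (S.card : ℝ) * ∑ w : W, ∑ σ ∈ S, ‖f w - f (w * σ)‖ ^ 2 :=
  stmt_12_general S hSne X hXne C hC hyp f
end
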